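/- For every integer n ≥ 2, one has ϱ_n = Σ_{k=2}^{n−1} (1/k)·( 1/((1 − 1/ℓ_k)(1 − τ_k)) − 1 ). -/

import Mathlib

open scoped BigOperators

/-- The sets `ℒ_m` of the lucky-number sieve. `luckySet 0` is a junk value. -/
noncomputable def luckySet : ℕ → Set ℕ
  | 0 => Set.univ
  | 1 => {k | 1 ≤ k}
  | 2 => {2} ∪ {k | 3 ≤ k ∧ Odd k}
  | m + 3 =>
      {x | ∃ n : ℕ, 1 ≤ n ∧ ¬ (Nat.nth (· ∈ luckySet (m + 2)) (m + 1) ∣ n) ∧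
        x = Nat.nth (· ∈ luckySet (m + 2)) (n - 1)}

/-- `ℓ_{m,n}`: the `n`-th element (1-indexed) of `ℒ_m` in increasing order. -/
noncomputable def luckyEll (m n : ℕ) : ℕ := Nat.nth (· ∈ luckySet m) (n - 1)

/-- The `n`-th lucky number: `ℓ_1 = 2` and `ℓ_n = ℓ_{n,n}` for `n ≥ 2`. -/
noncomputable def lucky : ℕ → ℕ
  | 1 => 2
  | n => luckyEll n n

/-- `L_n(x) = #(ℒ_n ∩ [1, x])`. -/
noncomputable def luckyCount (n : ℕ) (x : ℝ) : ℕ :=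
  {k : ℕ | k ∈ luckySet n ∧ 1 ≤ k ∧ (k : ℝ) ≤ x}.ncard

/-- `ρ_m = ∏_{i=1}^{m-1} (1 - 1/ℓ_i)⁻¹`. -/
noncomputable def luckyRho (m : ℕ) : ℝ :=
  ∏ i ∈ Finset.Icc 1 (m - 1), ((1 : ℝ) - 1 / (lucky i : ℝ))⁻¹

/-- `τ_{m,n} = (1/n) ∑_{i=1}^{m-1} (ρ_{i+1}/ρ_m) {L_i(ℓ_{m,n})/ℓ_i}`. -/
noncomputable def luckyTau2 (m n : ℕ) : ℝ :=
  (1 / (n : ℝ)) * ∑ i ∈ Finset.Icc 1 (m - 1),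
    (luckyRho (i + 1) / luckyRho m) *
      Int.fract ((luckyCount i (luckyEll m n : ℝ) : ℝ) / (lucky i : ℝ))

/-- `τ_m = τ_{m,m}`. -/
noncomputable def luckyTau (m : ℕ) : ℝ := luckyTau2 m m

/-- `ϱ_m = ρ_m - 1 - ∑_{k=1}^{m-1} 1/k`. -/
noncomputable def luckyVarrho (m : ℕ) : ℝ :=
  luckyRho m - 1 - ∑ k ∈ Finset.Icc 1 (m - 1), (1 : ℝ) / (k : ℝ)

/-- `ξ_{x,y} = ∑_{x < i < y} 1/ℓ_i`. -/
noncomputable def luckyXi (x y : ℝ) : ℝ :=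
  ∑ i ∈ Finset.Ioo ⌊x⌋₊ ⌈y⌉₊, 1 / (lucky i : ℝ)

noncomputable local instance luckyDec (m : ℕ) : DecidablePred (· ∈ luckySet m) :=
  Classical.decPred _

lemma luckySet_aux (m : ℕ) :
    (luckySet (m+2)).Infinite ∧ ∀ x ∈ luckySet (m+2), 2 ≤ x := by
  induction m with
  | zero =>
    constructor
    · apply Set.infinite_of_injective_forall_mem (f := fun n : ℕ => 2*n+3)
      · intro a b h; simp only [] at h; omega
      · intro n
        show 2*n+3 ∈ ({2} ∪ {k | 3 ≤ k ∧ Odd k} : Set ℕ)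
        exact Or.inr ⟨by omega, ⟨n+1, by ring⟩⟩
    · rintro x hx
      rcases hx with h | ⟨h3, _⟩
      · simp only [Set.mem_singleton_iff] at h; omega
      · omega
  | succ m ih =>
    obtain ⟨hinf, h2⟩ := ih
    have hinf' : {x | x ∈ luckySet (m+2)}.Infinite := hinf
    set p : ℕ → Prop := (· ∈ luckySet (m+2)) with hp
    set d : ℕ := Nat.nth p (m+1) with hd
    have hd2 : 2 ≤ d := h2 _ (Nat.nth_mem_of_infinite hinf' _)
    have hmem : ∀ x, x ∈ luckySet (m+3) ↔
        ∃ n : ℕ, 1 ≤ n ∧ ¬ (d ∣ n) ∧ x = Nat.nth p (n - 1) := by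
      intro x; simp [luckySet, hp, hd]
    constructor
    · apply Set.infinite_of_injective_forall_mem (f := fun j : ℕ => Nat.nth p (d*j))
      · intro a b h
        have := Nat.nth_injective hinf' h
        exact Nat.eq_of_mul_eq_mul_left (by omega) this
      · intro j
        rw [hmem]
        refine ⟨d*j+1, by omega, ?_, by simp⟩
        intro hdvd
        have h1 : d ∣ 1 := (Nat.dvd_add_right ⟨j, rfl⟩).mp hdvd
        have := Nat.le_of_dvd one_pos h1; omega
    · intro x hx
      rw [hmem] at hx
      obtain ⟨n, -, -, rfl⟩ := hx
      exact h2 _ (Nat.nth_mem_of_infinite hinf' _)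

lemma luckySet_infinite (m : ℕ) : {x | x ∈ luckySet m}.Infinite := by
  match m with
  | 0 => simpa [luckySet] using Set.infinite_univ
  | 1 =>
    apply Set.infinite_of_injective_forall_mem (f := fun n : ℕ => n+1)
    · intro a b h; simp only [] at h; omega
    · intro n; show n + 1 ∈ luckySet 1; simp [luckySet]
  | (m+2) => exact (luckySet_aux m).1

lemma one_le_of_mem {m x : ℕ} (hm : 1 ≤ m) (hx : x ∈ luckySet m) : 1 ≤ x := by
  match m with
  | 1 => simpa [luckySet] using hx
  | (m+2) => have := (luckySet_aux m).2 x hx; omega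

lemma lucky_two_le {i : ℕ} (hi : 1 ≤ i) : 2 ≤ lucky i := by
  match i with
  | 1 => simp [lucky]
  | (m+2) =>
    have : lucky (m+2) = luckyEll (m+2) (m+2) := by simp [lucky]
    rw [this, luckyEll]
    exact (luckySet_aux m).2 _ (Nat.nth_mem_of_infinite (luckySet_infinite (m+2)) _)
lemma luckyCount_natCast (m N : ℕ) (hm : 1 ≤ m) :
    luckyCount m (N : ℝ) = Nat.count (· ∈ luckySet m) (N + 1) := by
  rw [luckyCount, Nat.count_eq_card_filter_range, ← Set.ncard_coe_finset]
  congr 1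
  ext k
  simp only [Set.mem_setOf_eq, Finset.coe_filter, Finset.mem_range, Nat.lt_succ_iff]
  constructor
  · rintro ⟨h1, -, h3⟩; exact ⟨by exact_mod_cast h3, h1⟩
  · rintro ⟨h1, h2⟩; exact ⟨h2, one_le_of_mem hm h2, by exact_mod_cast h1⟩

lemma count_one (N : ℕ) : Nat.count (· ∈ luckySet 1) (N + 1) = N := by
  rw [Nat.count_eq_card_filter_range]
  have : ({x ∈ Finset.range (N+1) | x ∈ luckySet 1} : Finset ℕ) = Finset.Ioc 0 N := by
    ext k
    simp only [Finset.mem_filter, Finset.mem_range, Finset.mem_Ioc, Nat.lt_succ_iff]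
    simp only [luckySet, Set.mem_setOf_eq]
    omega
  rw [this]; simp

lemma count_two (N : ℕ) (hN : 2 ≤ N) :
    Nat.count (· ∈ luckySet 2) (N + 1) = N - N / 2 := by
  classical
  rw [Nat.count_eq_card_filter_range]
  have h1 : ({x ∈ Finset.range (N+1) | x ∈ luckySet 2} : Finset ℕ)
      = insert 2 (({n ∈ Finset.Ioc 0 N | ¬ 2 ∣ n}).erase 1) := by
    ext k
    simp only [Finset.mem_filter, Finset.mem_range, Finset.mem_insert, Finset.mem_erase,
      Finset.mem_Ioc, Nat.lt_succ_iff, luckySet, Set.mem_union, Set.mem_setOf_eq,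
      Set.mem_singleton_iff, Nat.odd_iff]
    omega
  have h2 : Finset.card ({n ∈ Finset.Ioc 0 N | ¬ 2 ∣ n}) + Finset.card ({n ∈ Finset.Ioc 0 N | 2 ∣ n})
      = Finset.card (Finset.Ioc 0 N) := by
    rw [add_comm]
    exact Finset.card_filter_add_card_filter_not _
  rw [Nat.Ioc_filter_dvd_card_eq_div, Nat.card_Ioc] at h2
  have hmem1 : (1 : ℕ) ∈ ({n ∈ Finset.Ioc 0 N | ¬ 2 ∣ n}) := by
    simp only [Finset.mem_filter, Finset.mem_Ioc]
    omega
  rw [h1, Finset.card_insert_of_notMem (by simp), Finset.card_erase_of_mem hmem1]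
  omega

lemma count_step (m N : ℕ) :
    Nat.count (· ∈ luckySet (m+3)) (N + 1) =
      Nat.count (· ∈ luckySet (m+2)) (N + 1)
        - Nat.count (· ∈ luckySet (m+2)) (N + 1) / lucky (m+2) := by
  classical
  set p : ℕ → Prop := (· ∈ luckySet (m+2)) with hp
  have hinf : {x | p x}.Infinite := luckySet_infinite (m+2)
  have hd : lucky (m+2) = Nat.nth p (m+1) := by
    simp [lucky, luckyEll, hp]
  set C := Nat.count p (N+1) with hC
  set d := lucky (m+2) with hdd
  have key : Finset.card ({n ∈ Finset.Ioc 0 C | ¬ d ∣ n})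
      = Finset.card ({x ∈ Finset.range (N+1) | x ∈ luckySet (m+3)}) := by
    apply Finset.card_bij (fun n _ => Nat.nth p (n - 1))
    · rintro n hn
      simp only [Finset.mem_filter, Finset.mem_Ioc] at hn
      obtain ⟨⟨hn0, hnC⟩, hnd⟩ := hn
      simp only [Finset.mem_filter, Finset.mem_range]
      constructor
      · have : n - 1 < Nat.count p (N+1) := by omega
        exact (Nat.lt_nth_iff_count_lt hinf).mp this
      · show Nat.nth p (n-1) ∈ luckySet (m+3)
        simp only [luckySet, Set.mem_setOf_eq]
        exact ⟨n, hn0, by rw [← hd]; exact hnd, rfl⟩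
    · rintro a ha b hb h
      simp only [Finset.mem_filter, Finset.mem_Ioc] at ha hb
      have := Nat.nth_injective hinf h
      omega
    · rintro x hx
      simp only [Finset.mem_filter, Finset.mem_range] at hx
      obtain ⟨hxN, hxm⟩ := hx
      simp only [luckySet, Set.mem_setOf_eq] at hxm
      obtain ⟨n, hn1, hnd, rfl⟩ := hxm
      refine ⟨n, ?_, rfl⟩
      simp only [Finset.mem_filter, Finset.mem_Ioc]
      have : n - 1 < Nat.count p (N+1) := (Nat.lt_nth_iff_count_lt hinf).mpr hxN
      exact ⟨⟨by omega, by omega⟩, by rw [hd]; exact hnd⟩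
  have h2 : Finset.card ({n ∈ Finset.Ioc 0 C | ¬ d ∣ n}) + Finset.card ({n ∈ Finset.Ioc 0 C | d ∣ n})
      = Finset.card (Finset.Ioc 0 C) := by
    rw [add_comm]
    exact Finset.card_filter_add_card_filter_not _
  rw [Nat.Ioc_filter_dvd_card_eq_div, Nat.card_Ioc] at h2
  rw [Nat.count_eq_card_filter_range, ← key]
  omega

lemma count_succ_step (i N : ℕ) (hi : 1 ≤ i) (hN : 2 ≤ N) :
    Nat.count (· ∈ luckySet (i+1)) (N + 1) =
      Nat.count (· ∈ luckySet i) (N + 1)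
        - Nat.count (· ∈ luckySet i) (N + 1) / lucky i := by
  match i with
  | 1 => rw [count_two N hN, count_one]; simp [lucky]
  | (m+2) => exact count_step m N
lemma lucky_cast_facts {i : ℕ} (hi : 1 ≤ i) :
    (0:ℝ) < 1 - 1 / (lucky i : ℝ) ∧ (2:ℝ) ≤ (lucky i : ℝ) := by
  have h2 : (2:ℝ) ≤ (lucky i : ℝ) := by exact_mod_cast lucky_two_le hi
  constructor
  · have : 1 / (lucky i : ℝ) ≤ 1/2 := by
      apply one_div_le_one_div_of_le <;> linarith
    linarith
  · exact h2

lemma luckyRho_pos (m : ℕ) : 0 < luckyRho m := by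
  rw [luckyRho]
  apply Finset.prod_pos
  intro i hi
  rw [Finset.mem_Icc] at hi
  exact inv_pos.mpr (lucky_cast_facts hi.1).1

lemma luckyRho_one : luckyRho 1 = 1 := by simp [luckyRho]

lemma luckyRho_two : luckyRho 2 = 2 := by
  rw [luckyRho]
  norm_num [lucky]

lemma luckyRho_succ {i : ℕ} (hi : 1 ≤ i) :
    luckyRho (i+1) = luckyRho i * (1 - 1 / (lucky i : ℝ))⁻¹ := by
  rw [luckyRho, luckyRho]
  have h1 : i + 1 - 1 = (i - 1) + 1 := by omega
  rw [h1, Finset.prod_Icc_succ_top (by omega), show i - 1 + 1 = i from by omega]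

lemma fract_nat_div (a b : ℕ) :
    Int.fract ((a:ℝ) / (b:ℝ)) = (a:ℝ) / (b:ℝ) - ((a / b : ℕ) : ℝ) := by
  have h0 : (0:ℝ) ≤ (a:ℝ) / (b:ℝ) := by positivity
  have h1 : ((⌊(a:ℝ) / (b:ℝ)⌋ : ℤ) : ℝ) = ((a / b : ℕ) : ℝ) := by
    rw [← Int.natCast_floor_eq_floor h0, Nat.floor_div_natCast, Nat.floor_natCast]
    exact Int.cast_natCast _
  rw [Int.fract, h1]

lemma count_real_step (i N : ℕ) (hi : 1 ≤ i) (hN : 2 ≤ N) :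
    ((Nat.count (· ∈ luckySet (i+1)) (N + 1) : ℕ) : ℝ) =
      (Nat.count (· ∈ luckySet i) (N + 1) : ℝ) * (1 - 1 / (lucky i : ℝ))
        + Int.fract ((Nat.count (· ∈ luckySet i) (N + 1) : ℝ) / (lucky i : ℝ)) := by
  rw [count_succ_step i N hi hN]
  set a := Nat.count (· ∈ luckySet i) (N+1)
  have hdiv : a / lucky i ≤ a := Nat.div_le_self _ _
  rw [Nat.cast_sub hdiv, fract_nat_div]
  have hb : (lucky i : ℝ) ≠ 0 := by
    have := (lucky_cast_facts hi).2; linarith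
  field_simp
  ring

lemma telescope_count (k : ℕ) (hk : 2 ≤ k) : ∀ i, 1 ≤ i →
    luckyRho i * (Nat.count (· ∈ luckySet i) (lucky k + 1) : ℝ)
      = (lucky k : ℝ) + ∑ j ∈ Finset.Icc 1 (i-1), luckyRho (j+1) *
          Int.fract ((Nat.count (· ∈ luckySet j) (lucky k + 1) : ℝ) / (lucky j : ℝ)) := by
  have hN : 2 ≤ lucky k := lucky_two_le (by omega)
  intro i hi
  induction i, hi using Nat.le_induction with
  | base => simp [luckyRho_one, count_one]
  | succ i hi ih =>
    have hfac : (0:ℝ) < 1 - 1 / (lucky i : ℝ) := (lucky_cast_facts hi).1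
    have h1 : i + 1 - 1 = (i - 1) + 1 := by omega
    rw [count_real_step i (lucky k) hi hN, h1, Finset.sum_Icc_succ_top (by omega),
      show i - 1 + 1 = i from by omega, luckyRho_succ hi, mul_add]
    have h3 : luckyRho i * (1 - 1 / (lucky i : ℝ))⁻¹ *
        ((Nat.count (· ∈ luckySet i) (lucky k + 1) : ℝ) * (1 - 1 / (lucky i : ℝ)))
        = luckyRho i * (Nat.count (· ∈ luckySet i) (lucky k + 1) : ℝ) := by
      field_simp
    rw [h3, ih]
    ring
lemma tau_eval {k : ℕ} (hk : 2 ≤ k) :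
    luckyTau k = 1 - (lucky k : ℝ) / (k * luckyRho k) := by
  have hρ := luckyRho_pos k
  have hk0 : (0:ℝ) < (k:ℝ) := by exact_mod_cast (by omega : 0 < k)
  have hEll : luckyEll k k = lucky k := by
    match k, hk with
    | (m+2), _ => simp [lucky]
  have hinf : {x | x ∈ luckySet k}.Infinite := luckySet_infinite k
  have hCk : (Nat.count (· ∈ luckySet k) (lucky k + 1)) = k := by
    have hnth : lucky k = Nat.nth (· ∈ luckySet k) (k-1) := by rw [← hEll]; rfl
    rw [hnth, Nat.count_nth_succ_of_infinite hinf]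
    omega
  have hsum := telescope_count k hk k (by omega)
  rw [hCk] at hsum
  rw [luckyTau, luckyTau2, hEll]
  have hterm : ∀ i ∈ Finset.Icc 1 (k-1),
      luckyRho (i+1) / luckyRho k *
          Int.fract ((luckyCount i ((lucky k : ℕ) : ℝ) : ℝ) / (lucky i : ℝ))
        = (luckyRho k)⁻¹ * (luckyRho (i+1) *
            Int.fract ((Nat.count (· ∈ luckySet i) (lucky k + 1) : ℝ) / (lucky i : ℝ))) := by
    intro i hi
    rw [Finset.mem_Icc] at hi
    rw [luckyCount_natCast i (lucky k) hi.1]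
    ring
  rw [Finset.sum_congr rfl hterm, ← Finset.mul_sum]
  have hS : ∑ j ∈ Finset.Icc 1 (k-1), luckyRho (j+1) *
        Int.fract ((Nat.count (· ∈ luckySet j) (lucky k + 1) : ℝ) / (lucky j : ℝ))
      = luckyRho k * (k:ℝ) - (lucky k : ℝ) := by linarith [hsum]
  rw [hS]
  field_simp

lemma term_eval {k : ℕ} (hk : 2 ≤ k) :
    (1 / (k:ℝ)) * (1 / ((1 - 1 / (lucky k : ℝ)) * (1 - luckyTau k)) - 1)
      = luckyRho (k+1) - luckyRho k - 1 / (k:ℝ) := by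
  have h1 : 1 - luckyTau k = (lucky k : ℝ) / ((k:ℝ) * luckyRho k) := by
    rw [tau_eval hk]; ring
  obtain ⟨hfac, hl2⟩ := lucky_cast_facts (show 1 ≤ k by omega)
  have hρ := luckyRho_pos k
  have hk0 : (0:ℝ) < (k:ℝ) := by exact_mod_cast (by omega : 0 < k)
  have hl0 : (lucky k : ℝ) ≠ 0 := by linarith
  rw [h1, luckyRho_succ (by omega : 1 ≤ k)]
  have hfac' : (1 - 1 / (lucky k : ℝ)) ≠ 0 := ne_of_gt hfac
  have hρ' : luckyRho k ≠ 0 := ne_of_gt hρ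
  have hk0' : (k:ℝ) ≠ 0 := ne_of_gt hk0
  have hl1 : (lucky k : ℝ) - 1 ≠ 0 := by linarith
  have hl1' : (-1 + (lucky k : ℝ)) ≠ 0 := by linarith
  field_simp
  ring

lemma rho_telescope : ∀ m, 1 ≤ m →
    ∑ k ∈ Finset.Icc 2 m, (luckyRho (k+1) - luckyRho k) = luckyRho (m+1) - luckyRho 2 := by
  intro m hm
  induction m, hm using Nat.le_induction with
  | base => simp
  | succ m hm ih => rw [Finset.sum_Icc_succ_top (by omega), ih]; ring

theorem varrho_eq_sum' (n : ℕ) (hn : 2 ≤ n) :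
    luckyVarrho n = ∑ k ∈ Finset.Icc 2 (n - 1),
      (1 / (k : ℝ)) * (1 / ((1 - 1 / (lucky k : ℝ)) * (1 - luckyTau k)) - 1) := by
  have h1 : ∀ k ∈ Finset.Icc 2 (n-1),
      (1 / (k : ℝ)) * (1 / ((1 - 1 / (lucky k : ℝ)) * (1 - luckyTau k)) - 1)
        = (luckyRho (k+1) - luckyRho k) - 1 / (k:ℝ) :=
    fun k hk => by rw [term_eval (Finset.mem_Icc.mp hk).1]
  rw [Finset.sum_congr rfl h1, Finset.sum_sub_distrib,
    rho_telescope (n-1) (by omega), show n - 1 + 1 = n from by omega, luckyRho_two]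
  rw [luckyVarrho]
  have h3 : Finset.Icc 1 (n-1) = insert 1 (Finset.Icc 2 (n-1)) := by
    ext k
    simp only [Finset.mem_Icc, Finset.mem_insert]
    omega
  rw [h3, Finset.sum_insert (by simp)]
  push_cast
  try ring

theorem varrho_eq_sum (n : ℕ) (hn : 2 ≤ n) :
    luckyVarrho n = ∑ k ∈ Finset.Icc 2 (n - 1),
      (1 / (k : ℝ)) * (1 / ((1 - 1 / (lucky k : ℝ)) * (1 - luckyTau k)) - 1) := by
  exact varrho_eq_sum' n hn
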